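/- None of the ℤ₂-lattices ⟨-1, -2⟩, ⟨-1, 6⟩, ⟨-1, -2, -2⟩, ⟨-1, -2, 6⟩ represents any element congruent to 1 mod 8; i.e., no vector in these lattices has norm ≡ 1 (mod 8). -/

import Mathlib

/-!
Reduce modulo 8. Since `6 ≡ -2 (mod 8)`, all four lattices have norms of the form
`-a² - 2(b² + c²)` modulo 8. If this were `≡ 1`, then `a` would be odd, so `a² ≡ 1` and
`b² + c² ≡ 3 (mod 4)`, which is impossible because squares are `0` or `1` modulo 4.
-/

open scoped Matrix BigOperators

/-- The bilinear form on `Fin n → ℤ₂` given by a Gram matrix. -/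
noncomputable def bf {n : ℕ} (M : Matrix (Fin n) (Fin n) ℤ_[2]) (x y : Fin n → ℤ_[2]) : ℤ_[2] :=
  ∑ i, ∑ j, x i * M i j * y j

lemma bf_diagonal_self {n : ℕ} (d x : Fin n → ℤ_[2]) :
    bf (Matrix.diagonal d) x x = ∑ i, d i * x i ^ 2 := by
  simp only [bf, Matrix.diagonal_apply, mul_ite, ite_mul, mul_zero, zero_mul,
    Finset.sum_ite_eq, Finset.mem_univ, if_true]
  exact Finset.sum_congr rfl fun i _ => by ring

lemma PadicInt.toZModPow_eq_zero_of_dvd {p : ℕ} [Fact p.Prime] (k : ℕ) {y : ℤ_[p]}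
    (h : (p : ℤ_[p]) ^ k ∣ y) : toZModPow k y = 0 := by
  have h' := map_dvd (toZModPow k) h
  rwa [map_pow, map_natCast, ← Nat.cast_pow, ZMod.natCast_self, zero_dvd_iff] at h'

lemma toZModPow_sum_mul_sq_of_dvd {n k : ℕ} {d x : Fin n → ℤ_[2]} {t : ℤ_[2]}
    (h : 2 ^ k ∣ bf (Matrix.diagonal d) x x - t) :
    ∑ i, PadicInt.toZModPow k (d i) * PadicInt.toZModPow k (x i) ^ 2 =
      PadicInt.toZModPow k t := by
  have h' := PadicInt.toZModPow_eq_zero_of_dvd (p := 2) k (by exact_mod_cast h)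
  simpa [bf_diagonal_self, sub_eq_zero] using h'

lemma ZMod.neg_sq_sub_two_mul_add_sq_ne_one (a b c : ZMod 8) :
    -a ^ 2 - 2 * (b ^ 2 + c ^ 2) ≠ 1 := by
  revert a b c
  decide

/-- None of the ℤ₂-lattices ⟨-1,-2⟩, ⟨-1,6⟩, ⟨-1,-2,-2⟩, ⟨-1,-2,6⟩ represents any
element congruent to 1 mod 8. -/
theorem no_norm_one_mod_eight :
    (∀ x : Fin 2 → ℤ_[2], ¬ (8 : ℤ_[2]) ∣ (bf (Matrix.diagonal ![(-1:ℤ_[2]), -2]) x x - 1)) ∧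
    (∀ x : Fin 2 → ℤ_[2], ¬ (8 : ℤ_[2]) ∣ (bf (Matrix.diagonal ![(-1:ℤ_[2]), 6]) x x - 1)) ∧
    (∀ x : Fin 3 → ℤ_[2], ¬ (8 : ℤ_[2]) ∣ (bf (Matrix.diagonal ![(-1:ℤ_[2]), -2, -2]) x x - 1)) ∧
    (∀ x : Fin 3 → ℤ_[2], ¬ (8 : ℤ_[2]) ∣ (bf (Matrix.diagonal ![(-1:ℤ_[2]), -2, 6]) x x - 1)) := by
  set φ : ℤ_[2] →+* ZMod (2 ^ 3) := PadicInt.toZModPow 3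
  have six : (6 : ZMod (2 ^ 3)) = -2 := rfl
  refine ⟨fun x h => ?_, fun x h => ?_, fun x h => ?_, fun x h => ?_⟩ <;>
    have hx := toZModPow_sum_mul_sq_of_dvd (k := 3) (by norm_num; exact h) <;>
    simp only [Fin.sum_univ_succ, Fin.sum_univ_zero, map_neg, map_one, map_ofNat,
      Matrix.cons_val_zero, Matrix.cons_val_succ, Fin.succ_zero_eq_one, Fin.succ_one_eq_two,
      six] at hx
  · exact ZMod.neg_sq_sub_two_mul_add_sq_ne_one (φ (x 0)) (φ (x 1)) 0 (by linear_combination hx)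
  · exact ZMod.neg_sq_sub_two_mul_add_sq_ne_one (φ (x 0)) (φ (x 1)) 0 (by linear_combination hx)
  · exact ZMod.neg_sq_sub_two_mul_add_sq_ne_one (φ (x 0)) (φ (x 1)) (φ (x 2))
      (by linear_combination hx)
  · exact ZMod.neg_sq_sub_two_mul_add_sq_ne_one (φ (x 0)) (φ (x 1)) (φ (x 2))
      (by linear_combination hx)
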